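/- arXiv:2311.04073 — 3 statements merged into one kernel-verified Lean document; each statement's English description precedes it below -/
import Mathlib

section
/- Let u_{ijt} be independent mean-zero random variables bounded by 1 in absolute value, indexed by i,j ∈ {1,…,N}, t ∈ {1,…,T}. Define S = Σ_{i=1}^N Σ_{j=1}^N Σ_{t=1}^T (Σ_{i'=1}^N u_{i'jt})(Σ_{j'=1}^N u_{ij't}). Then E[S²] ≤ C·N⁴T² for a universal constant C, hence S = O_P(N²T). -/
open MeasureTheory ProbabilityTheory Finset

/-! Writing `V_t = ∑_{i,j} u_{ijt}`, the cross term is `S = ∑_t V_t²`, so by Cauchy–Schwarz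
`S² ≤ T ∑_t V_t⁴`. Each `V_t` is a sum of `N²` independent centred variables bounded by 1.
For independent centred `X`, `Y` the odd mixed moments vanish, so
`E (X + Y)⁴ = E X⁴ + 6 E X² E Y² + E Y⁴`, and induction on the number of summands gives
`E V_t⁴ ≤ 3 (N²)²`. Hence `E S² ≤ 3 N⁴ T²`. -/

lemma sum_cross_term_eq_sum_sq {ι κ τ : Type*} [Fintype ι] [Fintype κ] [Fintype τ]
    (u : ι → κ → τ → ℝ) :
    ∑ i, ∑ j, ∑ t, (∑ i', u i' j t) * (∑ j', u i j' t) = ∑ t, (∑ i, ∑ j, u i j t) ^ 2 := by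
  have hswap : ∀ F : ι → κ → τ → ℝ, ∑ i, ∑ j, ∑ t, F i j t = ∑ t, ∑ i, ∑ j, F i j t :=
    fun F => (sum_congr rfl fun i _ => sum_comm).trans sum_comm
  rw [hswap]
  refine sum_congr rfl fun t _ => ?_
  calc ∑ i, ∑ j, (∑ i', u i' j t) * (∑ j', u i j' t)
      = ∑ j, ∑ i, (∑ i', u i' j t) * (∑ j', u i j' t) := sum_comm
    _ = (∑ j, ∑ i', u i' j t) * (∑ i, ∑ j', u i j' t) := (sum_mul_sum _ _ _ _).symm
    _ = (∑ i, ∑ j, u i j t) ^ 2 := by rw [sum_comm (γ := κ), sq]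

variable {Ω : Type*} [MeasurableSpace Ω] {μ : Measure Ω}

lemma MeasureTheory.MemLp.integrable_pow_of_le [IsFiniteMeasure μ] {X : Ω → ℝ} {n k : ℕ}
    (hX : MemLp X n μ) (hk : k ≤ n) : Integrable (fun ω => X ω ^ k) μ := by
  have hXk : MemLp X k μ := hX.mono_exponent (by exact_mod_cast hk)
  refine hXk.integrable_norm_pow'.mono' (hX.aestronglyMeasurable.pow k) ?_
  filter_upwards with ω
  simp [norm_pow]

namespace ProbabilityTheory

lemma iIndepFun.indepFun_sum_of_notMem {ι : Type*} {X : ι → Ω → ℝ} (hX : iIndepFun X μ)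
    (hmeas : ∀ i, AEMeasurable (X i) μ) {s : Finset ι} {a : ι} (ha : a ∉ s) :
    IndepFun (X a) (fun ω => ∑ i ∈ s, X i ω) μ := by
  simpa only [Finset.sum_fn] using (hX.indepFun_finsetSum_of_notMem₀ hmeas ha).symm

section Finite

variable [IsFiniteMeasure μ]

lemma integral_sq_sum_sq_le {τ : Type*} {V : τ → Ω → ℝ} {M : ℝ} (s : Finset τ)
    (hV : ∀ t, MemLp (V t) 4 μ) (hM : ∀ t, ∫ ω, V t ω ^ 4 ∂μ ≤ M) :
    ∫ ω, (∑ t ∈ s, V t ω ^ 2) ^ 2 ∂μ ≤ #s ^ 2 * M := by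
  have hV4 : ∀ t, Integrable (fun ω => V t ω ^ 4) μ := fun t => (hV t).integrable_pow_of_le le_rfl
  calc ∫ ω, (∑ t ∈ s, V t ω ^ 2) ^ 2 ∂μ ≤ ∫ ω, #s * ∑ t ∈ s, V t ω ^ 4 ∂μ := by
        refine integral_mono_of_nonneg (.of_forall fun ω => sq_nonneg _)
          ((integrable_finsetSum _ fun t _ => hV4 t).const_mul _) (.of_forall fun ω => ?_)
        convert sq_sum_le_card_mul_sum_sq (s := s) (f := fun t => V t ω ^ 2) using 3
        ring
    _ = #s * ∑ t ∈ s, ∫ ω, V t ω ^ 4 ∂μ := by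
        rw [integral_const_mul, integral_finsetSum _ fun t _ => hV4 t]
    _ ≤ #s * ∑ _t ∈ s, M := by gcongr with t; exact hM t
    _ = #s ^ 2 * M := by rw [sum_const, nsmul_eq_mul]; ring

lemma IndepFun.integral_add_pow {X Y : Ω → ℝ} {n : ℕ} (hXY : IndepFun X Y μ)
    (hX : MemLp X n μ) (hY : MemLp Y n μ) :
    ∫ ω, (X ω + Y ω) ^ n ∂μ =
      ∑ k ∈ range (n + 1), (∫ ω, X ω ^ k ∂μ) * (∫ ω, Y ω ^ (n - k) ∂μ) * n.choose k := by
  have hterm : ∀ k ∈ range (n + 1),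
      Integrable (fun ω => X ω ^ k * Y ω ^ (n - k) * n.choose k) μ ∧
      ∫ ω, X ω ^ k * Y ω ^ (n - k) * n.choose k ∂μ =
        (∫ ω, X ω ^ k ∂μ) * (∫ ω, Y ω ^ (n - k) ∂μ) * n.choose k := by
    intro k hk
    have hpow : IndepFun (fun ω => X ω ^ k) (fun ω => Y ω ^ (n - k)) μ :=
      hXY.comp (measurable_id.pow_const k) (measurable_id.pow_const (n - k))
    have hXk := hX.integrable_pow_of_le (Nat.lt_succ_iff.mp (mem_range.mp hk))
    have hYk := hY.integrable_pow_of_le (Nat.sub_le n k)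
    refine ⟨(hpow.integrable_mul hXk hYk).mul_const _, ?_⟩
    rw [integral_mul_const]
    exact congrArg (· * _) (hpow.integral_mul_eq_mul_integral
      hXk.aestronglyMeasurable hYk.aestronglyMeasurable)
  simp_rw [add_pow]
  rw [integral_finsetSum _ fun k hk => (hterm k hk).1]
  exact sum_congr rfl fun k hk => (hterm k hk).2

end Finite

variable [IsProbabilityMeasure μ]

lemma integral_pow_le_one_of_abs_le_one {X : Ω → ℝ} (hX : ∀ᵐ ω ∂μ, |X ω| ≤ 1) (k : ℕ) :
    ∫ ω, X ω ^ k ∂μ ≤ 1 := by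
  refine (le_abs_self _).trans ?_
  simpa using norm_integral_le_of_norm_le_const (μ := μ) (f := fun ω => X ω ^ k) (C := 1)
    (by filter_upwards [hX] with ω h; simpa [abs_pow] using pow_le_one₀ (abs_nonneg _) h)

lemma IndepFun.integral_add_sq {X Y : Ω → ℝ} (hXY : IndepFun X Y μ)
    (hX : MemLp X 2 μ) (hY : MemLp Y 2 μ) (hX0 : ∫ ω, X ω ∂μ = 0) :
    ∫ ω, (X ω + Y ω) ^ 2 ∂μ = ∫ ω, X ω ^ 2 ∂μ + ∫ ω, Y ω ^ 2 ∂μ := by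
  rw [hXY.integral_add_pow (n := 2) (by exact_mod_cast hX) (by exact_mod_cast hY)]
  simp only [sum_range_succ, sum_range_zero]
  norm_num [hX0]
  ring

lemma IndepFun.integral_add_pow_four {X Y : Ω → ℝ} (hXY : IndepFun X Y μ)
    (hX : MemLp X 4 μ) (hY : MemLp Y 4 μ) (hX0 : ∫ ω, X ω ∂μ = 0) (hY0 : ∫ ω, Y ω ∂μ = 0) :
    ∫ ω, (X ω + Y ω) ^ 4 ∂μ =
      ∫ ω, X ω ^ 4 ∂μ + 6 * (∫ ω, X ω ^ 2 ∂μ) * (∫ ω, Y ω ^ 2 ∂μ) + ∫ ω, Y ω ^ 4 ∂μ := by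
  rw [hXY.integral_add_pow (n := 4) (by exact_mod_cast hX) (by exact_mod_cast hY)]
  simp only [sum_range_succ, sum_range_zero]
  norm_num [hX0, hY0, Nat.choose]
  ring

variable {ι : Type*} {X : ι → Ω → ℝ}

lemma iIndepFun.integral_sum_sq (hX : iIndepFun X μ) (hmem : ∀ i, MemLp (X i) 2 μ)
    (h0 : ∀ i, ∫ ω, X i ω ∂μ = 0) (s : Finset ι) :
    ∫ ω, (∑ i ∈ s, X i ω) ^ 2 ∂μ = ∑ i ∈ s, ∫ ω, X i ω ^ 2 ∂μ := by
  classical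
  induction s using Finset.induction_on with
  | empty => simp
  | insert a s ha ih =>
    have hind := hX.indepFun_sum_of_notMem (fun i => (hmem i).aestronglyMeasurable.aemeasurable) ha
    simp_rw [sum_insert ha]
    rw [hind.integral_add_sq (hmem a) (memLp_finsetSum s fun i _ => hmem i) (h0 a), ih]

lemma iIndepFun.integral_sum_pow_four_le (hX : iIndepFun X μ) (hmem : ∀ i, MemLp (X i) 4 μ)
    (h0 : ∀ i, ∫ ω, X i ω ∂μ = 0) (h2 : ∀ i, ∫ ω, X i ω ^ 2 ∂μ ≤ 1)
    (h4 : ∀ i, ∫ ω, X i ω ^ 4 ∂μ ≤ 1) (s : Finset ι) :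
    ∫ ω, (∑ i ∈ s, X i ω) ^ 4 ∂μ ≤ 3 * (#s : ℝ) ^ 2 := by
  classical
  have hmem2 : ∀ i, MemLp (X i) 2 μ := fun i => (hmem i).mono_exponent (by norm_num)
  induction s using Finset.induction_on with
  | empty => simp
  | insert a s ha ih =>
    have hind := hX.indepFun_sum_of_notMem (fun i => (hmem i).aestronglyMeasurable.aemeasurable) ha
    have hsum0 : ∫ ω, ∑ i ∈ s, X i ω ∂μ = 0 := by
      rw [integral_finsetSum _ fun i _ => (hmem i).integrable (by norm_num)]
      exact sum_eq_zero fun i _ => h0 i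
    have hsum2 : ∫ ω, (∑ i ∈ s, X i ω) ^ 2 ∂μ ≤ #s := by
      rw [hX.integral_sum_sq hmem2 h0 s]
      simpa using sum_le_sum fun i (_ : i ∈ s) => h2 i
    simp_rw [sum_insert ha]
    rw [hind.integral_add_pow_four (hmem a) (memLp_finsetSum s fun i _ => hmem i) (h0 a) hsum0,
      card_insert_of_notMem ha]
    calc _ ≤ 1 + 6 * 1 * (#s : ℝ) + 3 * (#s : ℝ) ^ 2 := by
          gcongr
          exacts [h4 a, h2 a]
      _ ≤ 3 * ((#s + 1 : ℕ) : ℝ) ^ 2 := by push_cast; nlinarith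

end ProbabilityTheory

/-- There is a universal constant `C` such that for any independent mean-zero random
variables `u_{ijt}` bounded by 1 in absolute value, the cross term
`S = Σ_{i,j,t} (Σ_{i'} u_{i'jt})(Σ_{j'} u_{ij't})` satisfies `E[S²] ≤ C·N⁴T²`
(hence `S = O_P(N²T)`). -/
theorem cross_term_second_moment_bound :
    ∃ C : ℝ, 0 < C ∧
      ∀ (N T : ℕ) (Ω : Type) (_ : MeasureSpace Ω),
        IsProbabilityMeasure (volume : Measure Ω) →
        ∀ (u : Fin N → Fin N → Fin T → Ω → ℝ),
          (∀ i j t, Measurable (u i j t)) →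
          iIndepFun
            (fun p : Fin N × Fin N × Fin T => u p.1 p.2.1 p.2.2) volume →
          (∀ i j t, ∫ ω, u i j t ω = 0) →
          (∀ i j t, ∀ᵐ ω ∂(volume : Measure Ω), |u i j t ω| ≤ 1) →
          (∫ ω, (∑ i, ∑ j, ∑ t,
              (∑ i', u i' j t ω) * (∑ j', u i j' t ω)) ^ 2)
            ≤ C * (N : ℝ) ^ 4 * (T : ℝ) ^ 2 := by
  refine ⟨3, by norm_num, fun N T Ω _ _ u hmeas hindep hmean hbdd => ?_⟩
  set U : Fin N × Fin N × Fin T → Ω → ℝ := fun p => u p.1 p.2.1 p.2.2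
  set V : Fin T → Ω → ℝ := fun t ω => ∑ p ∈ univ ×ˢ univ ×ˢ {t}, U p ω
  have hU : ∀ p, MemLp (U p) 4 := fun p =>
    (memLp_top_of_bound (hmeas _ _ _).aestronglyMeasurable 1
      (by simpa using hbdd p.1 p.2.1 p.2.2)).mono_exponent le_top
  have hS : ∀ ω, ∑ i, ∑ j, ∑ t, (∑ i', u i' j t ω) * (∑ j', u i j' t ω) = ∑ t, V t ω ^ 2 :=
    fun ω => by simp [sum_cross_term_eq_sum_sq, V, U, sum_product]
  have hV4 : ∀ t, ∫ ω, V t ω ^ 4 ≤ 3 * ((N : ℝ) ^ 2) ^ 2 := fun t => by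
    convert hindep.integral_sum_pow_four_le hU (fun p => hmean _ _ _)
      (fun p => integral_pow_le_one_of_abs_le_one (hbdd _ _ _) 2)
      (fun p => integral_pow_le_one_of_abs_le_one (hbdd _ _ _) 4) _ using 3
    simp [sq]
  simp_rw [hS]
  calc ∫ ω, (∑ t, V t ω ^ 2) ^ 2 ≤ (#univ : ℝ) ^ 2 * (3 * ((N : ℝ) ^ 2) ^ 2) :=
        integral_sq_sum_sq_le _ (fun t => memLp_finsetSum _ fun p _ => hU p) hV4
    _ = 3 * (N : ℝ) ^ 4 * (T : ℝ) ^ 2 := by simp only [card_univ, Fintype.card_fin]; ring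
end

section
/- Let u_{ijt} be independent mean-zero random variables with |u_{ijt}| ≤ 1, for i,j ∈ {1,…,N}, t ∈ {1,…,T}. Define S = Σ_{i,t} (Σ_j u_{ijt})³. Then E[S²] ≤ C·N³T·(N² T + 1) ≤ C'(NT)³ for universal constants (under N ≍ T), because E[S²] splits into a diagonal term of order N³T·N² and a cross term involving products of third moments. -/
/-
Write `Z_{it} = (∑_j u_{ijt})³`. Rows `(i, t)` use disjoint sets of the `u`'s, so the `Z_{it}` are
pairwise independent and `E[S²] = ∑ Var Z_{it} + (∑ E Z_{it})² ≤ ∑ E Z_{it}² + (∑ |E Z_{it}|)²`.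
Expanding `E (∑_j u_j)ⁿ` into `∑_g E ∏_k u_{g k}`, independence kills every term in which some
index occurs exactly once; the surviving `g : Fin n → Fin N` take at most `n / 2` values, so there
are at most `N^(n/2) (n/2)ⁿ` of them, each of size at most `1`. Hence `|E Z| ≤ N` (`n = 3`) and
`E Z² ≤ 729 N³` (`n = 6`), giving `E[S²] ≤ 729 N⁴ T + N⁴ T²`.
-/

open MeasureTheory ProbabilityTheory Finset

def EachValueRepeated {α β : Type*} (g : α → β) : Prop :=
  ∀ a, ∃ b ≠ a, g b = g a

theorem EachValueRepeated.two_mul_card_image_le {α β : Type*} [Fintype α] [DecidableEq β]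
    {g : α → β} (hg : EachValueRepeated g) : 2 * #(univ.image g) ≤ Fintype.card α := by
  classical
  rw [← card_univ, card_eq_sum_card_image g univ, mul_comm, ← smul_eq_mul, ← sum_const]
  refine sum_le_sum fun y hy => ?_
  obtain ⟨a, -, rfl⟩ := mem_image.1 hy
  obtain ⟨b, hba, hb⟩ := hg a
  calc 2 = #{b, a} := (card_pair hba).symm
    _ ≤ _ := card_le_card fun c hc => by rcases mem_insert.1 hc with rfl | hc <;> simp_all

theorem exists_comp_eq_of_card_image_le {α β : Type*} [Fintype α] [Nonempty α] [DecidableEq β]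
    {g : α → β} {m : ℕ} (hm : #(univ.image g) ≤ m) :
    ∃ (φ : Fin m → β) (σ : α → Fin m), φ ∘ σ = g := by
  obtain ⟨e⟩ := Function.Embedding.nonempty_of_card_le (α := univ.image g) (β := Fin m)
    (by simpa using hm)
  have : Nonempty (univ.image g) := ⟨⟨g (Classical.arbitrary α), mem_image_of_mem g (mem_univ _)⟩⟩
  refine ⟨fun i => (Function.invFun e i).1, fun a => e ⟨g a, mem_image_of_mem g (mem_univ a)⟩, ?_⟩
  funext a
  simp [Function.leftInverse_invFun e.injective _]

open Classical in
theorem card_eachValueRepeated_le (α β : Type*) [Fintype α] [DecidableEq α] [Nonempty α]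
    [Fintype β] :
    #{g : α → β | EachValueRepeated g}
      ≤ Fintype.card β ^ (Fintype.card α / 2) * (Fintype.card α / 2) ^ Fintype.card α := by
  set m := Fintype.card α / 2
  calc #{g : α → β | EachValueRepeated g}
      ≤ #(univ.image fun p : (Fin m → β) × (α → Fin m) => p.1 ∘ p.2) := by
        refine card_le_card fun g hg => ?_
        have hm : #(univ.image g) ≤ m := by
          have := (mem_filter.1 hg).2.two_mul_card_image_le; omega
        obtain ⟨φ, σ, rfl⟩ := exists_comp_eq_of_card_image_le hm
        exact mem_image_of_mem _ (mem_univ (φ, σ))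
    _ ≤ Fintype.card ((Fin m → β) × (α → Fin m)) := card_image_le.trans_eq card_univ
    _ = Fintype.card β ^ m * m ^ Fintype.card α := by simp

section Probability

variable {Ω : Type*} {mΩ : MeasurableSpace Ω} {μ : Measure Ω}

theorem integral_prod_eq_zero_of_forall_ne {ι α : Type*} [Fintype ι] [Fintype α]
    {X : ι → Ω → ℝ} (hX : iIndepFun X μ) (hmeas : ∀ i, Measurable (X i))
    (hmean : ∀ i, ∫ ω, X i ω ∂μ = 0) (g : α → ι) {a : α} (ha : ∀ b ≠ a, g b ≠ g a) :
    ∫ ω, ∏ b, X (g b) ω ∂μ = 0 := by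
  classical
  have hpow : ∀ ω, ∏ b, X (g b) ω = ∏ i, X i ω ^ #{b | g b = i} := by
    intro ω
    rw [← prod_fiberwise univ g]
    refine prod_congr rfl fun i _ => ?_
    rw [prod_congr rfl fun b hb => by rw [(mem_filter.1 hb).2], prod_const]
  have hfiber : #{b | g b = g a} = 1 :=
    card_eq_one.2 ⟨a, by ext b; simpa using ⟨not_imp_not.1 (ha b), fun h => h ▸ rfl⟩⟩
  simp_rw [hpow]
  rw [hX.integral_fun_prod_comp (f := fun i x => x ^ #{b | g b = i})
    (fun i => (hmeas i).aemeasurable) fun i => (measurable_id.pow_const _).aestronglyMeasurable]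
  exact prod_eq_zero (mem_univ (g a)) (by simp [hfiber, hmean])


theorem ProbabilityTheory.iIndepFun.indepFun_rows {κ ι β : Type*} [Fintype ι] [MeasurableSpace β]
    {X : κ × ι → Ω → β} (hX : iIndepFun X μ) (hmeas : ∀ p, Measurable (X p)) {k l : κ}
    (hkl : k ≠ l) : (fun ω j => X (k, j) ω) ⟂ᵢ[μ] (fun ω j => X (l, j) ω) := by
  classical
  have hdisj : Disjoint (({k} : Finset κ) ×ˢ (univ : Finset ι)) ({l} ×ˢ univ) :=
    disjoint_product.2 (.inl (disjoint_singleton.2 hkl))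
  have hrow : ∀ {m : κ}, Measurable fun v : (({m} : Finset κ) ×ˢ (univ : Finset ι) → β) =>
      fun j => v ⟨(m, j), by simp⟩ :=
    fun {_} => measurable_pi_lambda _ fun _ => measurable_pi_apply _
  exact (hX.indepFun_finset _ _ hdisj hmeas).comp hrow hrow

variable [IsProbabilityMeasure μ]

theorem abs_integral_sum_pow_le {ι : Type*} [Fintype ι] {X : ι → Ω → ℝ} (hX : iIndepFun X μ)
    (hmeas : ∀ i, Measurable (X i)) (hmean : ∀ i, ∫ ω, X i ω ∂μ = 0)
    (hbound : ∀ i, ∀ᵐ ω ∂μ, |X i ω| ≤ 1) {n : ℕ} (hn : 0 < n) :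
    |∫ ω, (∑ i, X i ω) ^ n ∂μ| ≤ (Fintype.card ι ^ (n / 2) * (n / 2) ^ n : ℕ) := by
  classical
  have : Nonempty (Fin n) := ⟨⟨0, hn⟩⟩
  have hprod_bound : ∀ g : Fin n → ι, ∀ᵐ ω ∂μ, ‖∏ k, X (g k) ω‖ ≤ 1 := fun g => by
    filter_upwards [ae_all_iff.2 hbound] with ω hω
    simpa only [norm_prod] using prod_le_one (fun _ _ => norm_nonneg _) fun k _ => hω (g k)
  have hterm : ∀ g : Fin n → ι,
      |∫ ω, ∏ k, X (g k) ω ∂μ| ≤ if EachValueRepeated g then 1 else 0 := fun g => by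
    split_ifs with hg
    · simpa using norm_integral_le_of_norm_le_const (hprod_bound g)
    · obtain ⟨k, hk⟩ : ∃ k, ∀ l ≠ k, g l ≠ g k := by simpa [EachValueRepeated] using hg
      simp [integral_prod_eq_zero_of_forall_ne hX hmeas hmean g hk]
  have hint : ∀ g : Fin n → ι, Integrable (fun ω => ∏ k, X (g k) ω) μ := fun g =>
    .of_bound (Finset.measurable_prod _ fun k _ => hmeas (g k)).aestronglyMeasurable 1
      (hprod_bound g)
  simp_rw [Fintype.sum_pow]
  rw [integral_finsetSum _ fun g _ => hint g]
  calc |∑ g : Fin n → ι, ∫ ω, ∏ k, X (g k) ω ∂μ|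
      ≤ ∑ g : Fin n → ι, if EachValueRepeated g then (1 : ℝ) else 0 :=
        (abs_sum_le_sum_abs _ _).trans (sum_le_sum fun g _ => hterm g)
    _ ≤ _ := by
        rw [sum_boole]
        exact_mod_cast (card_eachValueRepeated_le (Fin n) ι).trans_eq (by simp)

theorem integral_sq_sum_le_of_pairwise_indepFun {ι : Type*} [Fintype ι]
    {Z : ι → Ω → ℝ} (hZ : ∀ k, MemLp (Z k) 2 μ) (hindep : Pairwise fun k l => Z k ⟂ᵢ[μ] Z l) :
    ∫ ω, (∑ k, Z k ω) ^ 2 ∂μ ≤ ∑ k, ∫ ω, Z k ω ^ 2 ∂μ + (∑ k, ∫ ω, Z k ω ∂μ) ^ 2 := by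
  have hvar := variance_eq_sub (memLp_finsetSum' univ fun k _ => hZ k)
  rw [IndepFun.variance_sum (fun k _ => hZ k) fun k _ l _ hkl => hindep hkl] at hvar
  have hmean : ∫ ω, ∑ k, Z k ω ∂μ = ∑ k, ∫ ω, Z k ω ∂μ :=
    integral_finsetSum _ fun k _ => (hZ k).integrable one_le_two
  have hvar_le : ∀ k, variance (Z k) μ ≤ ∫ ω, Z k ω ^ 2 ∂μ := fun k =>
    variance_le_expectation_sq (hZ k).aestronglyMeasurable
  simp only [Finset.sum_apply, Pi.pow_apply, hmean] at hvar
  linarith [sum_le_sum fun k (_ : k ∈ univ) => hvar_le k]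

theorem integral_sq_sum_rowSum_cube_le {κ ι : Type*} [Fintype κ] [Fintype ι] {X : κ × ι → Ω → ℝ}
    (hX : iIndepFun X μ) (hmeas : ∀ p, Measurable (X p)) (hmean : ∀ p, ∫ ω, X p ω ∂μ = 0)
    (hbound : ∀ p, ∀ᵐ ω ∂μ, |X p ω| ≤ 1) :
    ∫ ω, (∑ k, (∑ j, X (k, j) ω) ^ 3) ^ 2 ∂μ
      ≤ Fintype.card κ * (729 * Fintype.card ι ^ 3) + (Fintype.card κ * Fintype.card ι) ^ 2 := by
  set Z : κ → Ω → ℝ := fun k ω => (∑ j, X (k, j) ω) ^ 3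
  have hrow_moment : ∀ k {n : ℕ}, 0 < n →
      |∫ ω, (∑ j, X (k, j) ω) ^ n ∂μ| ≤ (Fintype.card ι ^ (n / 2) * (n / 2) ^ n : ℕ) :=
    fun k _ hn => abs_integral_sum_pow_le (hX.precomp (Prod.mk_right_injective k))
      (fun j => hmeas _) (fun j => hmean _) (fun j => hbound _) hn
  have hZ_sq : ∀ k, ∫ ω, Z k ω ^ 2 ∂μ ≤ 729 * Fintype.card ι ^ 3 := fun k => by
    have h := (le_abs_self _).trans (hrow_moment k (n := 6) (by norm_num))
    simp only [Z, ← pow_mul]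
    push_cast at h
    linarith
  have hZ_mean : ∀ k, |∫ ω, Z k ω ∂μ| ≤ Fintype.card ι := fun k => by
    simpa using hrow_moment k (n := 3) (by norm_num)
  have hZ_memLp : ∀ k, MemLp (Z k) 2 μ := fun k => by
    refine .of_bound (by fun_prop) (Fintype.card ι ^ 3) ?_
    filter_upwards [ae_all_iff.2 fun j => hbound (k, j)] with ω hω
    have hsum : |∑ j, X (k, j) ω| ≤ Fintype.card ι := by
      simpa using (abs_sum_le_sum_abs _ _).trans (sum_le_sum fun j (_ : j ∈ univ) => hω j)
    simpa [Z, abs_pow] using pow_le_pow_left₀ (abs_nonneg _) hsum 3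
  have hZ_indep : Pairwise fun k l => Z k ⟂ᵢ[μ] Z l := fun k l hkl =>
    (hX.indepFun_rows hmeas hkl).comp (φ := fun v : ι → ℝ => (∑ j, v j) ^ 3)
      (ψ := fun v : ι → ℝ => (∑ j, v j) ^ 3) (by fun_prop) (by fun_prop)
  calc ∫ ω, (∑ k, Z k ω) ^ 2 ∂μ ≤ ∑ k, ∫ ω, Z k ω ^ 2 ∂μ + (∑ k, ∫ ω, Z k ω ∂μ) ^ 2 :=
        integral_sq_sum_le_of_pairwise_indepFun hZ_memLp hZ_indep
    _ ≤ ∑ _k : κ, 729 * (Fintype.card ι : ℝ) ^ 3 + (∑ _k : κ, (Fintype.card ι : ℝ)) ^ 2 := by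
        refine add_le_add (sum_le_sum fun k _ => hZ_sq k) ?_
        rw [← sq_abs]
        exact pow_le_pow_left₀ (abs_nonneg _)
          ((abs_sum_le_sum_abs _ _).trans (sum_le_sum fun k _ => hZ_mean k)) 2
    _ = _ := by simp

end Probability

/-- There is a universal constant `C` such that for any independent mean-zero random
variables `u_{ijt}` bounded by 1 in absolute value, the cubic term
`S = Σ_{i,t} (Σ_j u_{ijt})³` satisfies `E[S²] ≤ C·N³T·(N²T + 1)`: the second moment
splits into a diagonal term of order `N³T·N²` and a cross term involving products
of third moments. -/
theorem cubic_term_second_moment_bound :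
    ∃ C : ℝ, 0 < C ∧
      ∀ (N T : ℕ) (Ω : Type) (_ : MeasureSpace Ω),
        IsProbabilityMeasure (volume : Measure Ω) →
        ∀ (u : Fin N → Fin N → Fin T → Ω → ℝ),
          (∀ i j t, Measurable (u i j t)) →
          iIndepFun
            (fun p : Fin N × Fin N × Fin T => u p.1 p.2.1 p.2.2) volume →
          (∀ i j t, ∫ ω, u i j t ω = 0) →
          (∀ i j t, ∀ᵐ ω ∂(volume : Measure Ω), |u i j t ω| ≤ 1) →
          (∫ ω, (∑ i, ∑ t, (∑ j, u i j t ω) ^ 3) ^ 2)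
            ≤ C * ((N : ℝ) ^ 3 * T * ((N : ℝ) ^ 2 * T + 1)) := by
  refine ⟨730, by norm_num, fun N T Ω _ _ u hmeas hindep hmean hbound => ?_⟩
  have hX : iIndepFun (fun q : (Fin N × Fin T) × Fin N => u q.1.1 q.2 q.1.2) volume :=
    hindep.precomp (g := fun q : (Fin N × Fin T) × Fin N => (q.1.1, q.2, q.1.2)) fun q q' h => by
      simp only [Prod.mk.injEq] at h
      exact Prod.ext (Prod.ext h.1 h.2.2) h.2.1
  have h := integral_sq_sum_rowSum_cube_le hX (fun q => hmeas _ _ _) (fun q => hmean _ _ _)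
    fun q => hbound _ _ _
  simp only [Fintype.sum_prod_type, Fintype.card_prod, Fintype.card_fin, Nat.cast_mul] at h
  refine h.trans ?_
  obtain rfl | hN := N.eq_zero_or_pos
  · simp
  have hN1 : (1 : ℝ) ≤ N := Nat.one_le_cast.2 hN
  have hT : (T : ℝ) ≤ T ^ 2 := by exact_mod_cast Nat.le_self_pow two_ne_zero T
  linarith [(by positivity : (0 : ℝ) ≤ N ^ 3 * T),
    mul_le_mul_of_nonneg_left hN1 (by positivity : (0 : ℝ) ≤ N ^ 4 * T),
    mul_le_mul_of_nonneg_left hN1 (by positivity : (0 : ℝ) ≤ N ^ 4 * T ^ 2),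
    mul_le_mul_of_nonneg_left hT (by positivity : (0 : ℝ) ≤ N ^ 5)]
end

section
/- Let A^{−1} be the NT×NT matrix whose entries are as follows: diagonal entries equal 1 − 1/√(NT) + 1/(3NT), entries sharing exactly one index (N+T−2 of them per row) equal −1/(2√(NT)) + 1/(3NT), and the remaining (N−1)(T−1) entries per row equal 1/(3NT). Then the row-sum norm satisfies ‖A^{−1}‖_∞ ≤ 4/3 + (N+T)/(2√(NT)), and if N/T → c with 0 < c < ∞, then limsup ‖A^{−1}‖_∞ ≤ 4/3 + (√c + 1/√c)/2, which is ≤ 7/3 when c = 1. -/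
open Filter

/-- The maximum row-sum (`∞`) norm of a matrix. -/
noncomputable def rowSumNorm {ι : Type*} [Fintype ι] (A : Matrix ι ι ℝ) : ℝ :=
  ⨆ i, ∑ j, |A i j|

/-- The `NT×NT` matrix `A⁻¹` whose diagonal entries are `1 − 1/√(NT) + 1/(3NT)`,
whose entries sharing exactly one of the two indices are `−1/(2√(NT)) + 1/(3NT)`,
and whose remaining entries are `1/(3NT)`. -/
noncomputable def Ainv (N T : ℕ) : Matrix (Fin N × Fin T) (Fin N × Fin T) ℝ :=
  fun p q =>
    if p = q then 1 - 1 / Real.sqrt (N * T) + 1 / (3 * N * T)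
    else if p.1 = q.1 ∨ p.2 = q.2 then -(1 / (2 * Real.sqrt (N * T))) + 1 / (3 * N * T)
    else 1 / (3 * N * T)

lemma row_bound (N T : ℕ) (hN : 0 < N) (hT : 0 < T) (p : Fin N × Fin T) :
    ∑ q, |Ainv N T p q| ≤ 4 / 3 + ((N : ℝ) + T) / (2 * Real.sqrt (N * T)) := by
  have hNT : (1:ℝ) ≤ (N:ℝ) * T := by
    have : (1:ℝ) ≤ (N:ℝ) := by exact_mod_cast hN
    have h2 : (1:ℝ) ≤ (T:ℝ) := by exact_mod_cast hT
    nlinarith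
  have hs0 : (1:ℝ) ≤ Real.sqrt ((N:ℝ) * T) := by
    rw [show (1:ℝ) = Real.sqrt 1 by simp]
    exact Real.sqrt_le_sqrt hNT
  set s : ℝ := 1 / (2 * Real.sqrt ((N:ℝ) * T)) with hs
  set t : ℝ := 1 / (3 * (N:ℝ) * T) with ht
  have hspos : 0 < s := by positivity
  have htpos : 0 < t := by
    have : (0:ℝ) < 3 * (N:ℝ) * T := by positivity
    positivity
  have key : ∀ q : Fin N × Fin T, |Ainv N T p q| ≤
      (if p = q then (1:ℝ) else 0) + (if p.1 = q.1 then s else 0)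
        + (if p.2 = q.2 then s else 0) + t := by
    intro q
    unfold Ainv
    by_cases h : p = q
    · subst h
      simp only [eq_self_iff_true, true_or, if_true]
      have h1 : 1 / Real.sqrt ((N:ℝ) * T) ≤ 1 := by
        rw [div_le_one (by linarith)]; linarith
      have h2 : 0 < 1 / Real.sqrt ((N:ℝ) * T) := by positivity
      have ht2 : (0:ℝ) < 1 / (3 * (N:ℝ) * T) := htpos
      have hs2 : (0:ℝ) < 1 / (2 * Real.sqrt ((N:ℝ) * T)) := hspos
      rw [abs_of_nonneg (by linarith)]
      linarith [hs.ge, hs.le, ht.ge, ht.le]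
    · rw [if_neg h]
      by_cases h2 : p.1 = q.1 ∨ p.2 = q.2
      · rw [if_pos h2, if_neg h]
        have habs : |-(s) + t| ≤ s + t := by
          calc |-(s) + t| ≤ |(-s)| + |t| := abs_add_le _ _
          _ = s + t := by rw [abs_neg, abs_of_pos hspos, abs_of_pos htpos]
        have : s + t ≤ (0:ℝ) + (if p.1 = q.1 then s else 0)
            + (if p.2 = q.2 then s else 0) + t := by
          rcases h2 with h2 | h2
          · rw [if_pos h2]; split <;> linarith
          · rw [if_pos h2]; split <;> linarith
        calc |(-(1 / (2 * Real.sqrt ((N:ℝ) * T))) + 1 / (3 * N * T))| = |-(s) + t| := by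
              rw [hs, ht]
          _ ≤ s + t := habs
          _ ≤ _ := this
      · rw [if_neg h2, if_neg h]
        have habs2 : |(1 / (3 * (N:ℝ) * T))| = t := abs_of_pos htpos
        rw [habs2]
        split <;> split <;> linarith
  calc ∑ q, |Ainv N T p q|
      ≤ ∑ q : Fin N × Fin T, ((if p = q then (1:ℝ) else 0) + (if p.1 = q.1 then s else 0)
        + (if p.2 = q.2 then s else 0) + t) := Finset.sum_le_sum fun q _ => key q
    _ = 1 + T * s + N * s + 1/3 := by
        rw [Finset.sum_add_distrib, Finset.sum_add_distrib, Finset.sum_add_distrib]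
        have e1 : ∑ q : Fin N × Fin T, (if p = q then (1:ℝ) else 0) = 1 := by
          rw [Finset.sum_ite_eq Finset.univ p (fun _ => (1:ℝ))]; simp
        have e2 : ∑ q : Fin N × Fin T, (if p.1 = q.1 then s else 0) = T * s := by
          rw [Fintype.sum_prod_type]
          have hx : ∀ x : Fin N, (∑ _y : Fin T, if p.1 = x then s else 0)
              = (if p.1 = x then (T:ℝ) * s else 0) := by
            intro x; split <;> simp [Finset.sum_const, mul_comm]
          rw [Finset.sum_congr rfl (fun x _ => hx x), Finset.sum_ite_eq]
          simp
        have e3 : ∑ q : Fin N × Fin T, (if p.2 = q.2 then s else 0) = N * s := by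
          rw [Fintype.sum_prod_type]
          have hy : ∀ x : Fin N, (∑ y : Fin T, if p.2 = y then s else 0) = s := by
            intro x; rw [Finset.sum_ite_eq]; simp
          rw [Finset.sum_congr rfl (fun x _ => hy x), Finset.sum_const]
          simp [mul_comm]
        have e4 : ∑ _q : Fin N × Fin T, t = 1/3 := by
          rw [Finset.sum_const]
          simp only [Finset.card_univ, Fintype.card_prod, Fintype.card_fin, nsmul_eq_mul, ht]
          push_cast
          field_simp
        rw [e1, e2, e3, e4]
    _ ≤ 4 / 3 + ((N : ℝ) + T) / (2 * Real.sqrt (N * T)) := by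
        rw [hs, div_eq_mul_one_div ((N:ℝ)+T)]
        nlinarith [hspos]

lemma rowSumNorm_nonneg {ι : Type*} [Fintype ι] (A : Matrix ι ι ℝ) : 0 ≤ rowSumNorm A := by
  unfold rowSumNorm
  rcases isEmpty_or_nonempty ι with h | h
  · simp [Real.iSup_of_isEmpty]
  · obtain ⟨i⟩ := h
    refine le_trans ?_ (le_ciSup (Set.Finite.bddAbove (Set.finite_range _)) i)
    positivity

lemma ratio_eq (n t : ℝ) (hn : 0 < n) (ht : 0 < t) :
    (n + t) / (2 * Real.sqrt (n * t)) = (Real.sqrt (n / t) + 1 / Real.sqrt (n / t)) / 2 := by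
  have ha : 0 < Real.sqrt n := Real.sqrt_pos.mpr hn
  have hb : 0 < Real.sqrt t := Real.sqrt_pos.mpr ht
  have h1 : Real.sqrt n * Real.sqrt n = n := Real.mul_self_sqrt hn.le
  have h2 : Real.sqrt t * Real.sqrt t = t := Real.mul_self_sqrt ht.le
  rw [Real.sqrt_mul hn.le, Real.sqrt_div hn.le]
  field_simp
  rw [sq, sq, h1, h2]

/-- The row-sum norm of `A⁻¹` satisfies `‖A⁻¹‖_∞ ≤ 4/3 + (N+T)/(2√(NT))`; and if
`N/T → c` with `0 < c < ∞` (both dimensions growing), then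
`limsup ‖A⁻¹‖_∞ ≤ 4/3 + (√c + 1/√c)/2`, which is `≤ 7/3` when `c = 1`. -/
theorem rowSumNorm_Ainv_bound :
    (∀ N T : ℕ, 0 < N → 0 < T →
      rowSumNorm (Ainv N T) ≤ 4 / 3 + ((N : ℝ) + T) / (2 * Real.sqrt (N * T))) ∧
    ∀ (N T : ℕ → ℕ) (c : ℝ), 0 < c →
      Tendsto N atTop atTop → Tendsto T atTop atTop →
      Tendsto (fun k => (N k : ℝ) / (T k : ℝ)) atTop (nhds c) →
      limsup (fun k => rowSumNorm (Ainv (N k) (T k))) atTop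
          ≤ 4 / 3 + (Real.sqrt c + 1 / Real.sqrt c) / 2 ∧
        (c = 1 → 4 / 3 + (Real.sqrt c + 1 / Real.sqrt c) / 2 ≤ 7 / 3) := by
  have part1 : ∀ N T : ℕ, 0 < N → 0 < T →
      rowSumNorm (Ainv N T) ≤ 4 / 3 + ((N : ℝ) + T) / (2 * Real.sqrt (N * T)) := by
    intro N T hN hT
    have : Nonempty (Fin N × Fin T) := ⟨⟨⟨0, hN⟩, ⟨0, hT⟩⟩⟩
    exact ciSup_le fun p => row_bound N T hN hT p
  refine ⟨part1, ?_⟩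
  intro N T c hc hN hT hr
  have hsc : (0:ℝ) < Real.sqrt c := Real.sqrt_pos.mpr hc
  constructor
  · set g : ℕ → ℝ := fun k =>
      4 / 3 + (Real.sqrt ((N k : ℝ) / (T k)) + 1 / Real.sqrt ((N k : ℝ) / (T k))) / 2 with hg
    have h1 : Tendsto (fun k => Real.sqrt ((N k : ℝ) / (T k))) atTop (nhds (Real.sqrt c)) :=
      (Real.continuous_sqrt.continuousAt.tendsto).comp hr
    have h2 : Tendsto (fun k => 1 / Real.sqrt ((N k : ℝ) / (T k))) atTop
        (nhds (1 / Real.sqrt c)) := by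
      exact Tendsto.div tendsto_const_nhds h1 (ne_of_gt hsc)
    have hφ : Tendsto g atTop (nhds (4 / 3 + (Real.sqrt c + 1 / Real.sqrt c) / 2)) := by
      rw [hg]
      exact tendsto_const_nhds.add ((h1.add h2).div_const 2)
    have hev : ∀ᶠ k in atTop, rowSumNorm (Ainv (N k) (T k)) ≤ g k := by
      filter_upwards [hN.eventually_ge_atTop 1, hT.eventually_ge_atTop 1] with k hk1 hk2
      have hn : 0 < N k := hk1
      have ht : 0 < T k := hk2
      have hnr : (0:ℝ) < (N k : ℝ) := by exact_mod_cast hn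
      have htr : (0:ℝ) < (T k : ℝ) := by exact_mod_cast ht
      calc rowSumNorm (Ainv (N k) (T k))
          ≤ 4 / 3 + ((N k : ℝ) + (T k)) / (2 * Real.sqrt ((N k) * (T k))) := part1 _ _ hn ht
        _ = g k := by rw [hg]; rw [ratio_eq _ _ hnr htr]
    have hcb : IsCoboundedUnder (· ≤ ·) atTop (fun k => rowSumNorm (Ainv (N k) (T k))) :=
      isCoboundedUnder_le_of_le atTop (fun k => rowSumNorm_nonneg _)
    calc limsup (fun k => rowSumNorm (Ainv (N k) (T k))) atTop
        ≤ limsup g atTop := limsup_le_limsup hev hcb hφ.isBoundedUnder_le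
      _ = _ := hφ.limsup_eq
  · intro h
    subst h
    rw [Real.sqrt_one]
    norm_num
end
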